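/- (Lemma 2, single branch.) Let K ≥ 2 be an integer, let α₁, α₂ ≥ 0, ρ > 0, ε > 0, and assume τ := α₁² − ε·α₂² > 0. Let X and Y be Exp(1)-distributed and Z be Gamma(K−1,1)-distributed real random variables, with X, Y, Z mutually independent. Then the probability that X·Y·α₁²/(X·Y·α₂² + X·Z + 1/ρ) < ε equals 1 − 2·√(ε/(ρτ))·K₁(2·√(ε/(ρτ))) / (1 + ε/τ)^{K−1}. -/

import Mathlib

open MeasureTheory ProbabilityTheory

/-- The modified Bessel function of the second kind, via its integral representation
`K_ν(x) = ∫₀^∞ exp(−x cosh t) cosh(ν t) dt`. -/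
noncomputable def besselK (ν x : ℝ) : ℝ :=
  ∫ t in Set.Ioi (0 : ℝ), Real.exp (-x * Real.cosh t) * Real.cosh (ν * t)

/-! Conditionally on `(X, Z)`, the event `SINR ≥ ε` is the exponential tail event
`Y ≥ b / X + s Z` with `b = ε / (ρ τ)` and `s = ε / τ`, of probability `e^{-b/X} e^{-sZ}`.
By independence the mean factorises: `E[e^{-sZ}] = (1 + s)^{-(K-1)}` is the Laplace transform of
the Gamma law, and `E[e^{-b/X}] = ∫₀^∞ e^{-b/x - x} dx` becomes `2√b K₁(2√b)` after the
substitution `x = √b eᵘ`, which turns the exponent into `-2√b cosh u`. -/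

open Real Set
open scoped ENNReal

lemma besselK_nonneg (ν x : ℝ) : 0 ≤ besselK ν x :=
  setIntegral_nonneg measurableSet_Ioi fun _ _ => by positivity

section ExpSubstitution

variable {σ : ℝ}

lemma image_const_mul_exp_univ (hσ : 0 < σ) : (fun u => σ * exp u) '' univ = Ioi 0 := by
  change ((σ * ·) ∘ exp) '' univ = _
  rw [image_comp, image_univ, range_exp, image_const_mul_Ioi_zero hσ]

lemma hasDerivWithinAt_const_mul_exp (u : ℝ) :
    HasDerivWithinAt (fun u => σ * exp u) (σ * exp u) univ u :=
  ((hasDerivAt_exp u).const_mul σ).hasDerivWithinAt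

lemma injOn_const_mul_exp (hσ : 0 < σ) : InjOn (fun u => σ * exp u) univ :=
  fun _ _ _ _ h => exp_injective (mul_left_cancel₀ hσ.ne' h)

lemma integrableOn_Ioi_zero_iff_integrable_comp_const_mul_exp (hσ : 0 < σ) {f : ℝ → ℝ} :
    IntegrableOn f (Ioi 0) ↔ Integrable fun u => σ * exp u * f (σ * exp u) := by
  rw [← image_const_mul_exp_univ hσ, integrableOn_image_iff_integrableOn_abs_deriv_smul
    MeasurableSet.univ (fun u _ => hasDerivWithinAt_const_mul_exp u) (injOn_const_mul_exp hσ),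
    integrableOn_univ]
  simp only [smul_eq_mul, abs_of_pos (mul_pos hσ (exp_pos _))]

lemma integral_Ioi_zero_eq_integral_comp_const_mul_exp (hσ : 0 < σ) (f : ℝ → ℝ) :
    ∫ x in Ioi 0, f x = ∫ u, σ * exp u * f (σ * exp u) := by
  rw [← image_const_mul_exp_univ hσ, integral_image_eq_integral_abs_deriv_smul
    MeasurableSet.univ (fun u _ => hasDerivWithinAt_const_mul_exp u) (injOn_const_mul_exp hσ),
    Measure.restrict_univ]
  simp only [smul_eq_mul, abs_of_pos (mul_pos hσ (exp_pos _))]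

end ExpSubstitution

lemma integral_exp_mul_of_even {g : ℝ → ℝ} (hg : ∀ u, g (-u) = g u)
    (hint : Integrable fun u => exp u * g u) :
    ∫ u, exp u * g u = 2 * ∫ u in Ioi 0, g u * cosh u := by
  have hint_neg : Integrable fun u => exp (-u) * g (-u) := hint.comp_neg
  calc ∫ u, exp u * g u
      = (∫ u in Ioi 0, exp u * g u) + ∫ u in Iic 0, exp u * g u := by
        rw [← integral_add_compl measurableSet_Ioi hint, compl_Ioi]
    _ = (∫ u in Ioi 0, exp u * g u) + ∫ u in Ioi 0, exp (-u) * g (-u) := by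
        rw [integral_comp_neg_Ioi (f := fun u => exp u * g u), neg_zero]
    _ = ∫ u in Ioi 0, 2 * (g u * cosh u) := by
        rw [← integral_add hint.integrableOn hint_neg.integrableOn]
        refine integral_congr_ae (ae_of_all _ fun u => ?_)
        simp only [hg, cosh_eq]
        ring
    _ = 2 * ∫ u in Ioi 0, g u * cosh u := integral_const_mul _ _

lemma integrableOn_exp_neg_div_sub {b : ℝ} (hb : 0 ≤ b) :
    IntegrableOn (fun x => exp (-(b / x) - x)) (Ioi 0) := by
  refine Integrable.mono' (exp_neg_integrableOn_Ioi 0 one_pos) ?_ ?_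
  · exact (by fun_prop : Measurable fun x => exp (-(b / x) - x)).aestronglyMeasurable
  · refine (ae_restrict_iff' measurableSet_Ioi).2 (ae_of_all _ fun x (hx : 0 < x) => ?_)
    rw [norm_of_nonneg (exp_pos _).le, exp_le_exp]
    have := div_nonneg hb hx.le
    linarith

lemma integral_exp_neg_div_sub_eq_besselK {b : ℝ} (hb : 0 < b) :
    ∫ x in Ioi 0, exp (-(b / x) - x) = 2 * √b * besselK 1 (2 * √b) := by
  have hσ : 0 < √b := sqrt_pos.2 hb
  have hexp : ∀ u, -(b / (√b * exp u)) - √b * exp u = -(2 * √b) * cosh u := by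
    intro u
    have hb' : √b ^ 2 = b := sq_sqrt hb.le
    rw [cosh_eq, exp_neg]
    field_simp
    linear_combination hb'
  have hsubst : ∀ u, √b * exp u * exp (-(b / (√b * exp u)) - √b * exp u)
      = exp u * (√b * exp (-(2 * √b) * cosh u)) := fun u => by rw [hexp]; ring
  have hint := (integrableOn_Ioi_zero_iff_integrable_comp_const_mul_exp hσ).1
    (integrableOn_exp_neg_div_sub hb.le)
  simp only [hsubst] at hint
  rw [integral_Ioi_zero_eq_integral_comp_const_mul_exp hσ]
  simp only [hsubst]
  rw [integral_exp_mul_of_even (fun u => by rw [cosh_neg]) hint, besselK]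
  simp only [one_mul, mul_assoc, integral_const_mul]

lemma ae_pos_gammaMeasure (a r : ℝ) : ∀ᵐ x ∂gammaMeasure a r, 0 < x := by
  rw [ae_iff]
  simp only [not_lt]
  change gammaMeasure a r (Iic 0) = 0
  rw [gammaMeasure, withDensity_apply _ measurableSet_Iic,
    setLIntegral_congr Iio_ae_eq_Iic.symm]
  exact lintegral_gammaPDF_of_nonpos le_rfl

lemma lintegral_gammaMeasure {a r : ℝ} {f : ℝ → ℝ≥0∞} (hf : Measurable f) :
    ∫⁻ x, f x ∂gammaMeasure a r =
      ∫⁻ x in Ioi 0, ENNReal.ofReal (r ^ a / Gamma a * x ^ (a - 1) * exp (-(r * x))) * f x := by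
  have hsupp : (gammaPDF a r * f).support ⊆ Ici 0 := fun x hx => by
    by_contra h
    exact hx (by simp [gammaPDF_of_neg (not_le.1 h)])
  have hmeas : Measurable (gammaPDF a r) := (measurable_gammaPDFReal a r).ennreal_ofReal
  rw [gammaMeasure, lintegral_withDensity_eq_lintegral_mul _ hmeas hf]
  rw [← setLIntegral_eq_of_support_subset hsupp, setLIntegral_congr Ioi_ae_eq_Ici.symm]
  exact setLIntegral_congr_fun measurableSet_Ioi fun x hx => by
    rw [Pi.mul_apply, gammaPDF_of_nonneg (le_of_lt hx)]

lemma lintegral_exp_neg_mul_gammaMeasure {a r s : ℝ} (ha : 0 < a) (hr : 0 < r)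
    (hrs : 0 < r + s) :
    ∫⁻ x, ENNReal.ofReal (exp (-(s * x))) ∂gammaMeasure a r =
      ENNReal.ofReal ((r / (r + s)) ^ a) := by
  have hΓ := Gamma_pos_of_pos ha
  have hpdf : ∀ x, r ^ a / Gamma a * x ^ (a - 1) * exp (-(r * x)) * exp (-(s * x))
      = r ^ a / Gamma a * (x ^ (a - 1) * exp (-((r + s) * x))) := fun x => by
    rw [add_mul, neg_add, exp_add]; ring
  have hint : IntegrableOn (fun x => x ^ (a - 1) * exp (-((r + s) * x))) (Ioi 0) := by
    refine (integrableOn_rpow_mul_exp_neg_mul_rpow (s := a - 1) (by linarith) zero_lt_one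
      hrs).congr_fun (fun x _ => ?_) measurableSet_Ioi
    simp only [rpow_one, neg_mul]
  have hnonneg : ∀ x ∈ Ioi (0 : ℝ),
      0 ≤ r ^ a / Gamma a * (x ^ (a - 1) * exp (-((r + s) * x))) :=
    fun x (hx : 0 < x) => by positivity
  rw [lintegral_gammaMeasure (by fun_prop),
    setLIntegral_congr_fun measurableSet_Ioi fun x (hx : 0 < x) => by
      rw [← ENNReal.ofReal_mul (by positivity), hpdf],
    ← ofReal_integral_eq_lintegral_ofReal (hint.const_mul _)
      ((ae_restrict_iff' measurableSet_Ioi).2 (ae_of_all _ hnonneg)),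
    integral_const_mul, integral_rpow_mul_exp_neg_mul_Ioi ha hrs,
    div_rpow hr.le hrs.le, one_div, inv_rpow hrs.le]
  field_simp

lemma lintegral_exp_neg_div_expMeasure {b : ℝ} (hb : 0 < b) :
    ∫⁻ x, ENNReal.ofReal (exp (-(b / x))) ∂expMeasure 1 =
      ENNReal.ofReal (2 * √b * besselK 1 (2 * √b)) := by
  have hdens : ∀ x,
      ENNReal.ofReal (1 ^ (1 : ℝ) / Gamma 1 * x ^ ((1 : ℝ) - 1) * exp (-(1 * x))) *
        ENNReal.ofReal (exp (-(b / x))) = ENNReal.ofReal (exp (-(b / x) - x)) := fun x => by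
    rw [← ENNReal.ofReal_mul (by simp [exp_nonneg]), sub_eq_add_neg (-(b / x)), exp_add]
    simp [mul_comm]
  simp only [expMeasure, lintegral_gammaMeasure (by fun_prop : Measurable fun x : ℝ =>
    ENNReal.ofReal (exp (-(b / x)))), hdens]
  rw [← ofReal_integral_eq_lintegral_ofReal (integrableOn_exp_neg_div_sub hb.le)
    (ae_of_all _ fun x => by positivity), integral_exp_neg_div_sub_eq_besselK hb]

lemma expMeasure_Ici {r c : ℝ} (hr : 0 < r) (hc : 0 ≤ c) :
    expMeasure r (Ici c) = ENNReal.ofReal (exp (-(r * c))) := by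
  have := isProbabilityMeasure_expMeasure hr
  have hac : expMeasure r ≪ volume := withDensity_absolutelyContinuous _ _
  have hcdf : 0 ≤ 1 - exp (-(r * c)) :=
    sub_nonneg.2 (exp_le_one_iff.2 (neg_nonpos.2 (by positivity)))
  rw [← measure_congr (hac.ae_eq Ioi_ae_eq_Ici), ← compl_Iic,
    prob_compl_eq_one_sub measurableSet_Iic, ← ofReal_cdf, cdf_expMeasure_eq hr, if_pos hc,
    ← ENNReal.ofReal_one, ← ENNReal.ofReal_sub _ hcdf]
  ring_nf

noncomputable def sinr (α₁ α₂ ρ x y z : ℝ) : ℝ :=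
  x * y * α₁ ^ 2 / (x * y * α₂ ^ 2 + x * z + 1 / ρ)

lemma measurable_sinr (α₁ α₂ ρ : ℝ) :
    Measurable fun p : (ℝ × ℝ) × ℝ => sinr α₁ α₂ ρ p.1.1 p.2 p.1.2 := by
  unfold sinr; fun_prop

lemma sinr_lt_iff {α₁ α₂ ρ ε τ x y z : ℝ} (hτ : τ = α₁ ^ 2 - ε * α₂ ^ 2) (hτpos : 0 < τ)
    (hρ : 0 < ρ) (hx : 0 < x) (hy : 0 < y) (hz : 0 ≤ z) :
    sinr α₁ α₂ ρ x y z < ε ↔ y < ε / (ρ * τ) / x + ε / τ * z := by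
  have hden : 0 < x * y * α₂ ^ 2 + x * z + 1 / ρ := by positivity
  have hthr : ε / (ρ * τ) / x + ε / τ * z = (ε * (x * z) + ε / ρ) / (x * τ) := by
    field_simp
    ring
  have hgap : ε * (x * y * α₂ ^ 2 + x * z + 1 / ρ) - x * y * α₁ ^ 2
      = ε * (x * z) + ε / ρ - y * (x * τ) := by
    rw [hτ]; ring
  rw [sinr, div_lt_iff₀ hden, hthr, lt_div_iff₀ (by positivity)]
  constructor <;> intro h <;> linarith

lemma expMeasure_sinr_ge {α₁ α₂ ρ ε τ x z : ℝ} (hτ : τ = α₁ ^ 2 - ε * α₂ ^ 2) (hτpos : 0 < τ)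
    (hρ : 0 < ρ) (hε : 0 ≤ ε) (hx : 0 < x) (hz : 0 ≤ z) :
    expMeasure 1 {y | ε ≤ sinr α₁ α₂ ρ x y z} =
      ENNReal.ofReal (exp (-(ε / (ρ * τ) / x))) * ENNReal.ofReal (exp (-(ε / τ * z))) := by
  have hset : {y | ε ≤ sinr α₁ α₂ ρ x y z} =ᵐ[expMeasure 1] Ici (ε / (ρ * τ) / x + ε / τ * z) := by
    filter_upwards [ae_pos_gammaMeasure 1 1] with y hy
    refine propext ?_
    change ε ≤ sinr α₁ α₂ ρ x y z ↔ ε / (ρ * τ) / x + ε / τ * z ≤ y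
    rw [← not_lt, sinr_lt_iff hτ hτpos hρ hx hy hz, not_lt]
  rw [measure_congr hset, expMeasure_Ici one_pos (by positivity), one_mul, neg_add, exp_add,
    ENNReal.ofReal_mul (exp_pos _).le]

lemma prod_expMeasure_gammaMeasure_sinr_ge {a α₁ α₂ ρ ε τ : ℝ} (ha : 0 < a)
    (hτ : τ = α₁ ^ 2 - ε * α₂ ^ 2) (hτpos : 0 < τ) (hρ : 0 < ρ) (hε : 0 < ε) :
    (((expMeasure 1).prod (gammaMeasure a 1)).prod (expMeasure 1))
        {p | ε ≤ sinr α₁ α₂ ρ p.1.1 p.2 p.1.2} =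
      ENNReal.ofReal (2 * √(ε / (ρ * τ)) * besselK 1 (2 * √(ε / (ρ * τ)))) *
        ENNReal.ofReal ((1 / (1 + ε / τ)) ^ a) := by
  have := isProbabilityMeasure_expMeasure one_pos
  have := isProbabilityMeasure_gammaMeasure ha one_pos
  have hmeas : MeasurableSet {p : (ℝ × ℝ) × ℝ | ε ≤ sinr α₁ α₂ ρ p.1.1 p.2 p.1.2} :=
    measurableSet_le measurable_const (measurable_sinr α₁ α₂ ρ)
  have hslice : ∀ᵐ w ∂(expMeasure 1).prod (gammaMeasure a 1),
      expMeasure 1 (Prod.mk w ⁻¹' {p | ε ≤ sinr α₁ α₂ ρ p.1.1 p.2 p.1.2}) =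
        ENNReal.ofReal (exp (-(ε / (ρ * τ) / w.1))) * ENNReal.ofReal (exp (-(ε / τ * w.2))) := by
    filter_upwards [Measure.quasiMeasurePreserving_fst.ae (ae_pos_gammaMeasure 1 1),
      Measure.quasiMeasurePreserving_snd.ae (ae_pos_gammaMeasure a 1)] with w hx hz
    exact expMeasure_sinr_ge (x := w.1) (z := w.2) hτ hτpos hρ hε.le hx hz.le
  rw [Measure.prod_apply hmeas, lintegral_congr_ae hslice,
    lintegral_prod_mul (f := fun x => ENNReal.ofReal (exp (-(ε / (ρ * τ) / x))))
      (g := fun z => ENNReal.ofReal (exp (-(ε / τ * z)))) (by fun_prop) (by fun_prop),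
    lintegral_exp_neg_div_expMeasure (by positivity),
    lintegral_exp_neg_mul_gammaMeasure ha one_pos (by positivity)]

lemma prod_expMeasure_gammaMeasure_sinr_lt {a α₁ α₂ ρ ε τ : ℝ} (ha : 0 < a)
    (hτ : τ = α₁ ^ 2 - ε * α₂ ^ 2) (hτpos : 0 < τ) (hρ : 0 < ρ) (hε : 0 < ε) :
    ((((expMeasure 1).prod (gammaMeasure a 1)).prod (expMeasure 1))
        {p | sinr α₁ α₂ ρ p.1.1 p.2 p.1.2 < ε}).toReal =
      1 - 2 * √(ε / (ρ * τ)) * besselK 1 (2 * √(ε / (ρ * τ))) / (1 + ε / τ) ^ a := by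
  have := isProbabilityMeasure_expMeasure one_pos
  have := isProbabilityMeasure_gammaMeasure ha one_pos
  have hmeas : MeasurableSet {p : (ℝ × ℝ) × ℝ | ε ≤ sinr α₁ α₂ ρ p.1.1 p.2 p.1.2} :=
    measurableSet_le measurable_const (measurable_sinr α₁ α₂ ρ)
  have hcompl : {p : (ℝ × ℝ) × ℝ | ε ≤ sinr α₁ α₂ ρ p.1.1 p.2 p.1.2}ᶜ =
      {p | sinr α₁ α₂ ρ p.1.1 p.2 p.1.2 < ε} := by ext; simp
  have hbessel := besselK_nonneg 1 (2 * √(ε / (ρ * τ)))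
  have hs : 0 < 1 + ε / τ := by positivity
  rw [← hcompl, prob_compl_eq_one_sub hmeas,
    ENNReal.toReal_sub_of_le prob_le_one ENNReal.one_ne_top,
    prod_expMeasure_gammaMeasure_sinr_ge ha hτ hτpos hρ hε, ENNReal.toReal_one,
    ENNReal.toReal_mul, ENNReal.toReal_ofReal (by positivity),
    ENNReal.toReal_ofReal (by positivity), one_div, inv_rpow hs.le, ← div_eq_mul_inv]

lemma ProbabilityTheory.iIndepFun.map_prodMk_prodMk_eq_prod {Ω β : Type*} [MeasurableSpace Ω]
    [MeasurableSpace β] {μ : Measure Ω} [IsFiniteMeasure μ] {X Y Z : Ω → β}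
    (h : iIndepFun ![X, Y, Z] μ) (hX : AEMeasurable X μ) (hY : AEMeasurable Y μ)
    (hZ : AEMeasurable Z μ) :
    μ.map (fun ω => ((X ω, Z ω), Y ω)) = ((μ.map X).prod (μ.map Z)).prod (μ.map Y) := by
  have hmeas : ∀ i, AEMeasurable (![X, Y, Z] i) μ := fun i => by fin_cases i <;> assumption
  have hXZ : IndepFun X Z μ := h.indepFun (i := 0) (j := 2) (by decide)
  have hXZY : IndepFun (fun ω => (X ω, Z ω)) Y μ :=
    h.indepFun_prodMk₀ hmeas 0 2 1 (by decide) (by decide)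
  rw [(indepFun_iff_map_prod_eq_prod_map_map (hX.prodMk hZ) hY).1 hXZY,
    (indepFun_iff_map_prod_eq_prod_map_map hX hZ).1 hXZ]

theorem stmt_15_general (K : ℕ) (hK : 2 ≤ K)
    (α₁ α₂ ρ ε τ : ℝ) (hρ : 0 < ρ) (hε : 0 < ε)
    (hτ : τ = α₁ ^ 2 - ε * α₂ ^ 2) (hτpos : 0 < τ)
    {Ω : Type*} [MeasureSpace Ω] [IsProbabilityMeasure (ℙ : Measure Ω)]
    (X Y Z : Ω → ℝ)
    (hX : Measure.map X ℙ = expMeasure 1)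
    (hY : Measure.map Y ℙ = expMeasure 1)
    (hZ : Measure.map Z ℙ = gammaMeasure (K - 1) 1)
    (hindep : iIndepFun ![X, Y, Z] ℙ) :
    (ℙ {ω | X ω * Y ω * α₁ ^ 2 / (X ω * Y ω * α₂ ^ 2 + X ω * Z ω + 1 / ρ) < ε}).toReal =
      1 - 2 * Real.sqrt (ε / (ρ * τ)) * besselK 1 (2 * Real.sqrt (ε / (ρ * τ))) /
        (1 + ε / τ) ^ ((K : ℝ) - 1) := by
  have ha : (0 : ℝ) < K - 1 := by
    have : (2 : ℝ) ≤ K := by exact_mod_cast hK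
    linarith
  have := isProbabilityMeasure_expMeasure one_pos
  have := isProbabilityMeasure_gammaMeasure ha one_pos
  have hXm := AEMeasurable.of_map_ne_zero (by rw [hX]; exact IsProbabilityMeasure.ne_zero _)
  have hYm := AEMeasurable.of_map_ne_zero (by rw [hY]; exact IsProbabilityMeasure.ne_zero _)
  have hZm := AEMeasurable.of_map_ne_zero (by rw [hZ]; exact IsProbabilityMeasure.ne_zero _)
  have hE : MeasurableSet {p : (ℝ × ℝ) × ℝ | sinr α₁ α₂ ρ p.1.1 p.2 p.1.2 < ε} :=
    measurableSet_lt (measurable_sinr α₁ α₂ ρ) measurable_const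
  have hlaw : ℙ {ω | sinr α₁ α₂ ρ (X ω) (Y ω) (Z ω) < ε} =
      (((expMeasure 1).prod (gammaMeasure ((K : ℝ) - 1) 1)).prod (expMeasure 1))
        {p | sinr α₁ α₂ ρ p.1.1 p.2 p.1.2 < ε} := by
    have hjoint := hindep.map_prodMk_prodMk_eq_prod hXm hYm hZm
    rw [hX, hY, hZ] at hjoint
    rw [← hjoint, Measure.map_apply_of_aemeasurable (by fun_prop) hE]
    rfl
  exact hlaw ▸ prod_expMeasure_gammaMeasure_sinr_lt ha hτ hτpos hρ hε

theorem stmt_15 (K : ℕ) (hK : 2 ≤ K)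
    (α₁ α₂ ρ ε τ : ℝ) (hα₁ : 0 ≤ α₁) (hα₂ : 0 ≤ α₂) (hρ : 0 < ρ) (hε : 0 < ε)
    (hτ : τ = α₁ ^ 2 - ε * α₂ ^ 2) (hτpos : 0 < τ)
    {Ω : Type*} [MeasureSpace Ω] [IsProbabilityMeasure (ℙ : Measure Ω)]
    (X Y Z : Ω → ℝ)
    (hX : Measure.map X ℙ = expMeasure 1)
    (hY : Measure.map Y ℙ = expMeasure 1)
    (hZ : Measure.map Z ℙ = gammaMeasure (K - 1) 1)
    (hindep : iIndepFun ![X, Y, Z] ℙ) :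
    (ℙ {ω | X ω * Y ω * α₁ ^ 2 / (X ω * Y ω * α₂ ^ 2 + X ω * Z ω + 1 / ρ) < ε}).toReal =
      1 - 2 * Real.sqrt (ε / (ρ * τ)) * besselK 1 (2 * Real.sqrt (ε / (ρ * τ))) /
        (1 + ε / τ) ^ ((K : ℝ) - 1) :=
  stmt_15_general K hK α₁ α₂ ρ ε τ hρ hε hτ hτpos X Y Z hX hY hZ hindep
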